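/- For every natural number i with 1 ≤ i ≤ k ≤ n, the polynomial e_i(x_1,...,x_n) belongs to the ideal generated by h_1(x_1,...,x_n), h_2(x_1,...,x_{n-1}), ..., h_k(x_1,...,x_{n-k+1}) in the polynomial ring in n variables. -/
import Mathlib

open MvPolynomial Finset

/-- Elementary symmetric polynomial of degree `k` in the first `m` variables `x_1,…,x_m`
(0-indexed: the variables `X i` with `(i : ℕ) < m`), viewed in the polynomial ring in
`n` variables. It is `1` for `k = 0` and `0` for `k > m`. -/
noncomputable def esymb (R : Type) [CommRing R] (n m k : ℕ) : MvPolynomial (Fin n) R :=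
  ∑ S ∈ (Finset.univ.filter (fun i : Fin n => (i : ℕ) < m)).powersetCard k, ∏ i ∈ S, X i

/-- Complete homogeneous symmetric polynomial of degree `k` in the first `m` variables
`x_1,…,x_m` (0-indexed: the variables `X i` with `(i : ℕ) < m`), viewed in the polynomial
ring in `n` variables. It is `1` for `k = 0` and, for `k > 0`, it is `0` when `m = 0`. -/
noncomputable def hsymb (R : Type) [CommRing R] (n m k : ℕ) : MvPolynomial (Fin n) R :=
  ∑ μ ∈ (Finset.univ.filter (fun i : Fin n => (i : ℕ) < m)).sym k,
    ((μ : Multiset (Fin n)).map X).prod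

variable (R : Type) [CommRing R] (n : ℕ)

lemma esymb_zero (m : ℕ) : esymb R n m 0 = 1 := by
  simp [esymb]

lemma hsymb_zero (m : ℕ) : hsymb R n m 0 = 1 := by
  rw [hsymb, Finset.sym_zero, Finset.sum_singleton]
  rfl

lemma hsymb_nil (k : ℕ) : hsymb R n 0 (k + 1) = 0 := by
  have h : (Finset.univ.filter (fun i : Fin n => (i : ℕ) < 0)) = ∅ := by
    simp
  simp [hsymb, h]

lemma esymb_eq_zero (m k : ℕ) (h : m < k) : esymb R n m k = 0 := by
  have hc : (Finset.univ.filter (fun i : Fin n => (i : ℕ) < m)).card ≤ m := by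
    have := Finset.card_le_card_of_injOn
      (s := Finset.univ.filter (fun i : Fin n => (i : ℕ) < m)) (t := Finset.range m)
      (fun i : Fin n => (i : ℕ))
      (fun a ha => Finset.mem_range.2 (Finset.mem_filter.1 ha).2)
      (fun a _ b _ hab => Fin.ext hab)
    simpa using this
  have : (Finset.univ.filter (fun i : Fin n => (i : ℕ) < m)).powersetCard k = ∅ :=
    Finset.powersetCard_eq_empty.2 (lt_of_le_of_lt hc h)
  simp [esymb, this]

lemma filter_succ (m : ℕ) (hm : m < n) :
    (Finset.univ.filter (fun i : Fin n => (i : ℕ) < m + 1)) =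
      insert ⟨m, hm⟩ (Finset.univ.filter (fun i : Fin n => (i : ℕ) < m)) := by
  ext i
  simp [Fin.ext_iff]
  omega

lemma esymb_rec (m k : ℕ) (hm : m < n) :
    esymb R n (m + 1) (k + 1) = esymb R n m (k + 1) + X ⟨m, hm⟩ * esymb R n m k := by
  classical
  set s := Finset.univ.filter (fun i : Fin n => (i : ℕ) < m) with hs
  have ha : (⟨m, hm⟩ : Fin n) ∉ s := by simp [hs]
  rw [esymb, filter_succ n m hm, Finset.powersetCard_succ_insert ha,
    Finset.sum_union, Finset.sum_image]
  · congr 1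
    rw [esymb, Finset.mul_sum]
    apply Finset.sum_congr rfl
    intro S hS
    have haS : (⟨m, hm⟩ : Fin n) ∉ S := fun h => ha ((Finset.mem_powersetCard.1 hS).1 h)
    rw [Finset.prod_insert haS]
  · intro S hS T hT hST
    have haS : (⟨m, hm⟩ : Fin n) ∉ S := fun h => ha ((Finset.mem_powersetCard.1 hS).1 h)
    have haT : (⟨m, hm⟩ : Fin n) ∉ T := fun h => ha ((Finset.mem_powersetCard.1 hT).1 h)
    rw [← Finset.erase_insert haS, ← Finset.erase_insert haT, hST]
  · rw [Finset.disjoint_left]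
    intro S hS hS'
    have haS : (⟨m, hm⟩ : Fin n) ∉ S := fun h => ha ((Finset.mem_powersetCard.1 hS).1 h)
    obtain ⟨T, _, rfl⟩ := Finset.mem_image.1 hS'
    exact haS (Finset.mem_insert_self _ _)

lemma sym_insert_decomp {α : Type*} [DecidableEq α] (a : α) (s : Finset α) (ha : a ∉ s) (k : ℕ) :
    (insert a s).sym (k + 1) = s.sym (k + 1) ∪ ((insert a s).sym k).image (Sym.cons a) := by
  ext μ
  constructor
  · intro hμ
    rw [Finset.mem_sym_iff] at hμ
    by_cases haμ : a ∈ μ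
    · refine Finset.mem_union_right _ (Finset.mem_image.2 ⟨μ.erase a haμ, ?_, Sym.cons_erase haμ⟩)
      refine Finset.mem_sym_iff.2 fun b hb => hμ b ?_
      have : b ∈ (μ.erase a haμ : Multiset α) := hb
      rw [Sym.coe_erase] at this
      exact Multiset.mem_of_mem_erase this
    · refine Finset.mem_union_left _ (Finset.mem_sym_iff.2 fun b hb => ?_)
      rcases Finset.mem_insert.1 (hμ b hb) with rfl | h
      · exact absurd hb haμ
      · exact h
  · intro hμ
    rcases Finset.mem_union.1 hμ with h | h
    · exact Finset.sym_mono (Finset.subset_insert a s) _ h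
    · obtain ⟨τ, hτ, rfl⟩ := Finset.mem_image.1 h
      refine Finset.mem_sym_iff.2 fun b hb => ?_
      rcases Sym.mem_cons.1 hb with rfl | h'
      · exact Finset.mem_insert_self _ _
      · exact Finset.mem_sym_iff.1 hτ b h'

lemma hsymb_rec (m k : ℕ) (hm : m < n) :
    hsymb R n (m + 1) (k + 1) = hsymb R n m (k + 1) + X ⟨m, hm⟩ * hsymb R n (m + 1) k := by
  classical
  set s := Finset.univ.filter (fun i : Fin n => (i : ℕ) < m) with hs
  have ha : (⟨m, hm⟩ : Fin n) ∉ s := by simp [hs]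
  rw [hsymb, filter_succ n m hm, sym_insert_decomp _ _ ha, Finset.sum_union, Finset.sum_image]
  · congr 1
    rw [hsymb, filter_succ n m hm, Finset.mul_sum]
    exact Finset.sum_congr rfl fun μ _ => by
      rw [Sym.coe_cons, Multiset.map_cons, Multiset.prod_cons]
  · intro μ _ ν _ h
    exact (Sym.cons_inj_right _ μ ν).1 h
  · rw [Finset.disjoint_left]
    intro μ hμ hμ'
    obtain ⟨τ, _, rfl⟩ := Finset.mem_image.1 hμ'
    exact ha (Finset.mem_sym_iff.1 hμ _ (Sym.mem_cons_self _ _))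

lemma red (i m : ℕ) (hi : 1 ≤ i) (him : i ≤ m) (hmn : m ≤ n) :
    (∑ j ∈ Finset.range (i + 1),
      (-1 : MvPolynomial (Fin n) R) ^ j * esymb R n (m - j) (i - j) * hsymb R n (m - j + 1) j)
    = (∑ j ∈ Finset.range i,
      (-1 : MvPolynomial (Fin n) R) ^ j * esymb R n (m - 1 - j) (i - j) * hsymb R n (m - j) j)
      + (-1) ^ i * hsymb R n (m - i) i := by
  set g : ℕ → MvPolynomial (Fin n) R :=
    fun j => (-1) ^ j * esymb R n (m - j) (i - j) * hsymb R n (m - j) j with hg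
  have hstep : ∀ j ∈ Finset.range i,
      (-1 : MvPolynomial (Fin n) R) ^ (j+1) * esymb R n (m - (j+1)) (i - (j+1)) *
          hsymb R n (m - (j+1) + 1) (j+1)
        = g (j+1) - g j +
          (-1) ^ j * esymb R n (m - 1 - j) (i - j) * hsymb R n (m - j) j := by
    intro j hj
    rw [Finset.mem_range] at hj
    have hqn : m - 1 - j < n := by omega
    have hh := hsymb_rec R n (m - 1 - j) j hqn
    have he := esymb_rec R n (m - 1 - j) (i - 1 - j) hqn
    have e4 : m - 1 - j + 1 = m - j := by omega
    have e5 : i - 1 - j + 1 = i - j := by omega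
    rw [e4] at hh
    rw [e4, e5] at he
    have e1 : m - (j+1) = m - 1 - j := by omega
    have e2 : m - (j+1) + 1 = m - j := by omega
    have e3 : i - (j+1) = i - 1 - j := by omega
    simp only [hg]
    rw [e1, e4, e3, hh, he]
    ring
  rw [Finset.sum_range_succ']
  rw [Finset.sum_congr rfl hstep]
  have hf0 : (-1 : MvPolynomial (Fin n) R) ^ 0 * esymb R n (m - 0) (i - 0) *
      hsymb R n (m - 0 + 1) 0 = g 0 := by
    simp [hg, hsymb_zero]
  rw [hf0]
  rw [Finset.sum_add_distrib, Finset.sum_sub_distrib]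
  have h1 : (∑ j ∈ Finset.range i, g (j+1)) + g 0 = (∑ j ∈ Finset.range i, g j) + g i := by
    rw [← Finset.sum_range_succ', Finset.sum_range_succ]
  have hgi : g i = (-1 : MvPolynomial (Fin n) R) ^ i * hsymb R n (m - i) i := by
    simp [hg, esymb_zero]
  linear_combination h1 + (-1 : MvPolynomial (Fin n) R) ^ i * 0 + hgi

lemma key (i : ℕ) (hi : 1 ≤ i) : ∀ m, i ≤ m → m ≤ n →
    (∑ j ∈ Finset.range (i + 1),
      (-1 : MvPolynomial (Fin n) R) ^ j * esymb R n (m - j) (i - j) * hsymb R n (m - j + 1) j)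
      = 0 := by
  intro m
  induction m with
  | zero => intro h1 _; omega
  | succ m ih =>
    intro him hmn
    rw [red R n i (m+1) hi him hmn]
    by_cases hcase : i = m + 1
    · have hz : ∀ j ∈ Finset.range i,
          (-1 : MvPolynomial (Fin n) R) ^ j * esymb R n (m + 1 - 1 - j) (i - j) *
            hsymb R n (m + 1 - j) j = 0 := by
        intro j hj
        rw [Finset.mem_range] at hj
        rw [esymb_eq_zero R n _ _ (by omega)]
        ring
      rw [Finset.sum_congr rfl hz]
      have hmi : m + 1 - i = 0 := by omega
      rw [hmi]
      obtain ⟨i', rfl⟩ : ∃ i', i = i' + 1 := ⟨i - 1, by omega⟩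
      rw [hsymb_nil]
      simp
    · have him' : i ≤ m := by omega
      have h0 := ih him' (by omega)
      rw [Finset.sum_range_succ] at h0
      have hc : ∀ j ∈ Finset.range i,
          (-1 : MvPolynomial (Fin n) R) ^ j * esymb R n (m + 1 - 1 - j) (i - j) *
            hsymb R n (m + 1 - j) j
          = (-1 : MvPolynomial (Fin n) R) ^ j * esymb R n (m - j) (i - j) *
            hsymb R n (m - j + 1) j := by
        intro j hj
        rw [Finset.mem_range] at hj
        have e1 : m + 1 - 1 - j = m - j := by omega
        have e2 : m + 1 - j = m - j + 1 := by omega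
        rw [e1, e2]
      rw [Finset.sum_congr rfl hc]
      have e3 : m + 1 - i = m - i + 1 := by omega
      rw [e3]
      have he : esymb R n (m - i) (i - i) = 1 := by rw [Nat.sub_self]; exact esymb_zero R n _
      rw [he, mul_one] at h0
      linear_combination h0

/-- e_i(x_1,…,x_n) ∈ ⟨h_1(x_1,…,x_n), h_2(x_1,…,x_{n-1}),…,h_k(x_1,…,x_{n-k+1})⟩ for 1 ≤ i ≤ k ≤ n. -/
theorem stmt8 (R : Type) [CommRing R] (n k i : ℕ) (hi : 1 ≤ i) (hik : i ≤ k) (hkn : k ≤ n) :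
    esymb R n n i ∈ Ideal.span ((fun j => hsymb R n (n + 1 - j) j) '' Set.Icc 1 k) := by

  have h0 := key R n i hi n (le_trans hik hkn) le_rfl
  rw [Finset.sum_range_succ'] at h0
  simp only [Nat.sub_zero, pow_zero, one_mul, hsymb_zero, mul_one] at h0
  have hrep : esymb R n n i
      = -∑ j ∈ Finset.range i, (-1 : MvPolynomial (Fin n) R) ^ (j+1) *
          esymb R n (n - (j+1)) (i - (j+1)) * hsymb R n (n - (j+1) + 1) (j+1) := by
    linear_combination h0
  rw [hrep]
  refine neg_mem (Ideal.sum_mem _ fun j hj => ?_)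
  rw [Finset.mem_range] at hj
  have e : n - (j+1) + 1 = n + 1 - (j+1) := by omega
  rw [e]
  exact Ideal.mul_mem_left _ _
    (Ideal.subset_span ⟨j+1, Set.mem_Icc.2 ⟨by omega, by omega⟩, rfl⟩)
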